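/- arXiv:1812.05013 — 2 statements merged into one kernel-verified Lean document; each statement's English description precedes it below -/
import Mathlib

section
/- Let n, k, t be positive integers, let α ≥ 0, and let F ∈ ℂ^{n×n} be a unitary matrix all of whose entries satisfy |F_{ij}| ≤ α. Then for every k-sparse vector x̂ ∈ ℂ^n and every t-sparse vector e ∈ ℂ^n, ‖x̂‖₂² + ‖e‖₂² − 2α√(k·t)·‖x̂‖₂·‖e‖₂ ≤ ‖F^{-1}x̂ + e‖₂² ≤ ‖x̂‖₂² + ‖e‖₂² + 2α√(k·t)·‖x̂‖₂·‖e‖₂. -/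
/-- The Euclidean (ℓ2) norm of a complex vector. -/
noncomputable def l2norm {n : ℕ} (x : Fin n → ℂ) : ℝ :=
  Real.sqrt (∑ i, ‖x i‖ ^ 2)

/-- A vector is `k`-sparse if at most `k` of its entries are nonzero. -/
def Sparse {n : ℕ} (k : ℕ) (x : Fin n → ℂ) : Prop :=
  (Finset.univ.filter (fun i => x i ≠ 0)).card ≤ k

/-!
Expanding the square gives `‖Fᴴx̂ + e‖² = ‖x̂‖² + ‖e‖² + 2 Re⟨Fᴴx̂, e⟩`, since `Fᴴ` is an isometry.
Every entry of `Fᴴ` has modulus at most `α`, so `|⟨Fᴴx̂, e⟩| ≤ α ‖x̂‖₁ ‖e‖₁`, and by Cauchy–Schwarz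
on the supports a `k`-sparse vector satisfies `‖x‖₁ ≤ √k ‖x‖₂`.
-/

open Matrix

section Bilinear

variable {R m n : Type*} [NormedRing R] [Fintype m] [Fintype n]

theorem norm_mulVec_dotProduct_le {A : Matrix m n R} {α : ℝ} (hA : ∀ i j, ‖A i j‖ ≤ α)
    (x : n → R) (y : m → R) :
    ‖(A *ᵥ x) ⬝ᵥ y‖ ≤ α * (∑ j, ‖x j‖) * ∑ i, ‖y i‖ := by
  calc ‖(A *ᵥ x) ⬝ᵥ y‖ ≤ ∑ i, ∑ j, ‖A i j‖ * ‖x j‖ * ‖y i‖ := by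
        refine (norm_sum_le _ _).trans (Finset.sum_le_sum fun i _ => ?_)
        refine (norm_mul_le _ _).trans ?_
        rw [← Finset.sum_mul]
        refine mul_le_mul_of_nonneg_right ((norm_sum_le _ _).trans ?_) (norm_nonneg _)
        exact Finset.sum_le_sum fun j _ => norm_mul_le (A i j) (x j)
    _ ≤ ∑ i, ∑ j, α * ‖x j‖ * ‖y i‖ := by
        gcongr with i _ j _
        exact hA i j
    _ = α * (∑ j, ‖x j‖) * ∑ i, ‖y i‖ := by
        simp only [Finset.mul_sum, Finset.sum_mul]

end Bilinear

section L2Norm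

variable {n : ℕ}

theorem l2norm_nonneg (x : Fin n → ℂ) : 0 ≤ l2norm x :=
  Real.sqrt_nonneg _

theorem l2norm_sq (x : Fin n → ℂ) : l2norm x ^ 2 = ∑ i, ‖x i‖ ^ 2 :=
  Real.sq_sqrt (Finset.sum_nonneg fun _ _ => sq_nonneg _)

theorem l2norm_sq_eq_re_star_dotProduct (x : Fin n → ℂ) : l2norm x ^ 2 = (star x ⬝ᵥ x).re := by
  simp [l2norm_sq, dotProduct, Complex.re_sum, Complex.sq_norm, Complex.normSq_apply]

theorem l2norm_add_sq (x y : Fin n → ℂ) :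
    l2norm (x + y) ^ 2 = l2norm x ^ 2 + l2norm y ^ 2 + 2 * (x ⬝ᵥ star y).re := by
  simp only [l2norm_sq, Pi.add_apply, Complex.sq_norm, Complex.normSq_add, dotProduct,
    Pi.star_apply, Complex.star_def, Complex.re_sum, Finset.sum_add_distrib, Finset.mul_sum]

theorem l2norm_conjTranspose_mulVec {F : Matrix (Fin n) (Fin n) ℂ} (hF : F * Fᴴ = 1)
    (x : Fin n → ℂ) : l2norm (Fᴴ *ᵥ x) = l2norm x := by
  have hdot : star (Fᴴ *ᵥ x) ⬝ᵥ (Fᴴ *ᵥ x) = star x ⬝ᵥ x := by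
    rw [star_mulVec, dotProduct_mulVec, vecMul_vecMul, conjTranspose_conjTranspose, hF,
      vecMul_one]
  rw [← sq_eq_sq₀ (l2norm_nonneg _) (l2norm_nonneg _),
    l2norm_sq_eq_re_star_dotProduct, l2norm_sq_eq_re_star_dotProduct, hdot]

theorem Sparse.sum_norm_le {k : ℕ} {x : Fin n → ℂ} (hx : Sparse k x) :
    ∑ i, ‖x i‖ ≤ Real.sqrt k * l2norm x := by
  set s := Finset.univ.filter fun i => x i ≠ 0
  have hsupp : ∑ i, ‖x i‖ = ∑ i ∈ s, ‖x i‖ :=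
    (Finset.sum_subset (Finset.subset_univ _) fun i _ hi => by simp_all [s]).symm
  have hsq : (∑ i, ‖x i‖) ^ 2 ≤ k * ∑ i, ‖x i‖ ^ 2 := by
    rw [hsupp]
    calc (∑ i ∈ s, ‖x i‖) ^ 2 ≤ s.card * ∑ i ∈ s, ‖x i‖ ^ 2 := sq_sum_le_card_mul_sum_sq
      _ ≤ k * ∑ i, ‖x i‖ ^ 2 := by
        gcongr
        · exact_mod_cast hx
        · exact Finset.subset_univ _
  rw [l2norm, ← Real.sqrt_mul (Nat.cast_nonneg k)]
  exact Real.le_sqrt_of_sq_le hsq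

end L2Norm

theorem quadratic_rip_estimate_general
    (n k t : ℕ) (α : ℝ) (hα : 0 ≤ α)
    (F : Matrix (Fin n) (Fin n) ℂ)
    (hFunit : F * F.conjTranspose = 1 ∧ F.conjTranspose * F = 1)
    (hF : ∀ i j, ‖F i j‖ ≤ α)
    (xh : Fin n → ℂ) (hxh : Sparse k xh)
    (e : Fin n → ℂ) (he : Sparse t e) :
    l2norm xh ^ 2 + l2norm e ^ 2 - 2 * α * Real.sqrt (k * t) * l2norm xh * l2norm e ≤
        l2norm (F.conjTranspose.mulVec xh + e) ^ 2 ∧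
      l2norm (F.conjTranspose.mulVec xh + e) ^ 2 ≤
        l2norm xh ^ 2 + l2norm e ^ 2 + 2 * α * Real.sqrt (k * t) * l2norm xh * l2norm e := by
  have hFh : ∀ i j, ‖Fᴴ i j‖ ≤ α := fun i j => by simpa using hF j i
  have hcross : |((Fᴴ *ᵥ xh) ⬝ᵥ star e).re| ≤
      α * Real.sqrt (k * t) * l2norm xh * l2norm e :=
    calc |((Fᴴ *ᵥ xh) ⬝ᵥ star e).re| ≤ α * (∑ i, ‖xh i‖) * ∑ i, ‖e i‖ := by
          simpa using (Complex.abs_re_le_norm _).trans (norm_mulVec_dotProduct_le hFh xh (star e))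
      _ ≤ α * (Real.sqrt k * l2norm xh) * (Real.sqrt t * l2norm e) := by
          have hxh_nonneg := l2norm_nonneg xh
          gcongr
          exacts [hxh.sum_norm_le, he.sum_norm_le]
      _ = α * Real.sqrt (k * t) * l2norm xh * l2norm e := by
          rw [Real.sqrt_mul (Nat.cast_nonneg k)]
          ring
  rw [l2norm_add_sq, l2norm_conjTranspose_mulVec hFunit.1]
  constructor <;> linarith [abs_le.mp hcross]

/-- Two-sided quadratic estimate for `‖F⁻¹x̂ + e‖₂²` when `F` is unitary with entries of
modulus at most `α`, `x̂` is `k`-sparse and `e` is `t`-sparse. Here `F⁻¹ = Fᴴ`. -/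
theorem quadratic_rip_estimate
    (n k t : ℕ) (hn : 0 < n) (hk : 0 < k) (ht : 0 < t) (α : ℝ) (hα : 0 ≤ α)
    (F : Matrix (Fin n) (Fin n) ℂ)
    (hFunit : F * F.conjTranspose = 1 ∧ F.conjTranspose * F = 1)
    (hF : ∀ i j, ‖F i j‖ ≤ α)
    (xh : Fin n → ℂ) (hxh : Sparse k xh)
    (e : Fin n → ℂ) (he : Sparse t e) :
    l2norm xh ^ 2 + l2norm e ^ 2 - 2 * α * Real.sqrt (k * t) * l2norm xh * l2norm e ≤
        l2norm (F.conjTranspose.mulVec xh + e) ^ 2 ∧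
      l2norm (F.conjTranspose.mulVec xh + e) ^ 2 ≤
        l2norm xh ^ 2 + l2norm e ^ 2 + 2 * α * Real.sqrt (k * t) * l2norm xh * l2norm e :=
  quadratic_rip_estimate_general n k t α hα F hFunit hF xh hxh e he
end

section
/- Let n, k, t be positive integers, let α ≥ 0 with 2α·√(k·t) ≤ 0.19, and let F ∈ ℂ^{n×n} be a unitary matrix all of whose entries satisfy |F_{ij}| ≤ α. Suppose x̂₁, x̂₂ ∈ ℂ^n are k-sparse, e₁, e₂ ∈ ℂ^n are t-sparse, and β ∈ ℂ^n satisfies F^{-1}x̂₁ + e₁ + β = F^{-1}x̂₂ + e₂. Then √(‖x̂₁ − x̂₂‖₂² + ‖e₁ − e₂‖₂²) ≤ ‖β‖₂ / 0.9. -/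
/-!
Put `x = x̂₁ - x̂₂` (`2k`-sparse), `e = e₁ - e₂` (`2t`-sparse) and `u = F⁻¹x`, so that
`β = -(u + e)` and `‖u‖ = ‖x‖`. Every entry of `u` is at most `α‖x‖₁`, hence
`|⟪u, e⟫| ≤ α‖x‖₁‖e‖₁ ≤ α√(2k)√(2t)‖x‖‖e‖ ≤ 0.19‖u‖‖e‖` by Cauchy–Schwarz on the supports.
Expanding `‖u + e‖²` then gives `‖β‖² ≥ 0.81 (‖x‖² + ‖e‖²)`.
-/

open Matrix WithLp

theorem one_sub_mul_norm_sq_add_norm_sq_le_norm_add_sq {𝕜 E : Type*} [RCLike 𝕜]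
    [NormedAddCommGroup E] [InnerProductSpace 𝕜 E] {u v : E} {δ : ℝ} (hδ : 0 ≤ δ)
    (h : ‖inner 𝕜 u v‖ ≤ δ * ‖u‖ * ‖v‖) :
    (1 - δ) * (‖u‖ ^ 2 + ‖v‖ ^ 2) ≤ ‖u + v‖ ^ 2 := by
  have hre : -‖inner 𝕜 u v‖ ≤ RCLike.re (inner 𝕜 u v) :=
    neg_le_of_abs_le (RCLike.abs_re_le_norm _)
  rw [norm_add_sq (𝕜 := 𝕜)]
  nlinarith [mul_nonneg hδ (sq_nonneg (‖u‖ - ‖v‖))]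

theorem sqrt_norm_sq_add_norm_sq_le_norm_add_div {𝕜 E : Type*} [RCLike 𝕜]
    [NormedAddCommGroup E] [InnerProductSpace 𝕜 E] {u v : E} {δ : ℝ} (hδ₀ : 0 ≤ δ)
    (hδ : δ ≤ 0.19) (h : ‖inner 𝕜 u v‖ ≤ δ * ‖u‖ * ‖v‖) :
    √(‖u‖ ^ 2 + ‖v‖ ^ 2) ≤ ‖u + v‖ / 0.9 := by
  have key := one_sub_mul_norm_sq_add_norm_sq_le_norm_add_sq hδ₀ h
  rw [le_div_iff₀ (by norm_num)]
  calc √(‖u‖ ^ 2 + ‖v‖ ^ 2) * 0.9 = √(0.9 ^ 2 * (‖u‖ ^ 2 + ‖v‖ ^ 2)) := by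
        rw [Real.sqrt_mul' _ (by positivity), Real.sqrt_sq (by norm_num), mul_comm]
    _ ≤ √(‖u + v‖ ^ 2) := Real.sqrt_le_sqrt (by nlinarith)
    _ = ‖u + v‖ := Real.sqrt_sq (norm_nonneg _)

theorem norm_toLp_mulVec_of_conjTranspose_mul_self {𝕜 ι : Type*} [RCLike 𝕜] [Fintype ι]
    [DecidableEq ι] {U : Matrix ι ι 𝕜} (hU : Uᴴ * U = 1) (x : ι → 𝕜) :
    ‖toLp 2 (U *ᵥ x)‖ = ‖toLp 2 x‖ := by
  have h : inner 𝕜 (toLp 2 (U *ᵥ x)) (toLp 2 (U *ᵥ x)) = inner 𝕜 (toLp 2 x) (toLp 2 x) := by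
    rw [EuclideanSpace.inner_toLp_toLp, EuclideanSpace.inner_toLp_toLp, dotProduct_comm,
      star_mulVec, dotProduct_mulVec, vecMul_vecMul, hU, vecMul_one, dotProduct_comm]
  rw [inner_self_eq_norm_sq_to_K, inner_self_eq_norm_sq_to_K] at h
  rw [← sq_eq_sq₀ (norm_nonneg _) (norm_nonneg _)]
  exact_mod_cast h

theorem norm_mulVec_apply_le {𝕜 ι κ : Type*} [RCLike 𝕜] [Fintype κ] {A : Matrix ι κ 𝕜}
    {α : ℝ} (hA : ∀ i j, ‖A i j‖ ≤ α) (x : κ → 𝕜) (i : ι) :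
    ‖(A *ᵥ x) i‖ ≤ α * ∑ j, ‖x j‖ := by
  calc ‖(A *ᵥ x) i‖ ≤ ∑ j, ‖A i j * x j‖ := norm_sum_le _ _
    _ ≤ ∑ j, α * ‖x j‖ := by
        gcongr with j
        rw [norm_mul]
        exact mul_le_mul_of_nonneg_right (hA i j) (norm_nonneg _)
    _ = α * ∑ j, ‖x j‖ := (Finset.mul_sum _ _ _).symm

theorem norm_inner_toLp_le {𝕜 ι : Type*} [RCLike 𝕜] [Fintype ι] {y : ι → 𝕜} {M : ℝ}
    (hy : ∀ i, ‖y i‖ ≤ M) (e : ι → 𝕜) :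
    ‖inner 𝕜 (toLp 2 y) (toLp 2 e)‖ ≤ M * ∑ i, ‖e i‖ := by
  rw [EuclideanSpace.inner_toLp_toLp, Finset.mul_sum]
  refine (norm_sum_le _ _).trans (Finset.sum_le_sum fun i _ => ?_)
  rw [Pi.star_apply, norm_mul, norm_star, mul_comm]
  exact mul_le_mul_of_nonneg_right (hy i) (norm_nonneg _)

theorem l2norm_eq_norm_toLp {n : ℕ} (x : Fin n → ℂ) : l2norm x = ‖toLp 2 x‖ :=
  (EuclideanSpace.norm_eq _).symm

namespace Sparse

variable {n k l : ℕ} {v w : Fin n → ℂ}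

theorem sub (hv : Sparse k v) (hw : Sparse l w) : Sparse (k + l) (v - w) := by
  classical
  refine le_trans (Finset.card_le_card fun i hi => ?_)
    ((Finset.card_union_le _ _).trans (add_le_add hv hw))
  simp only [Finset.mem_filter, Finset.mem_univ, true_and, Finset.mem_union, Pi.sub_apply] at hi ⊢
  by_contra! h
  exact hi (by rw [h.1, h.2, sub_zero])

theorem sum_norm_le_sqrt_mul_norm_toLp (hv : Sparse k v) :
    ∑ i, ‖v i‖ ≤ √k * ‖toLp 2 v‖ := by
  classical
  set s := Finset.univ.filter (fun i => v i ≠ 0)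
  have hsupp : ∑ i ∈ s, ‖v i‖ = ∑ i, ‖v i‖ :=
    Finset.sum_filter_of_ne fun i _ hi => by simpa using hi
  simp only [EuclideanSpace.norm_eq]
  rw [← Real.sqrt_mul (Nat.cast_nonneg k), Real.le_sqrt (by positivity) (by positivity), ← hsupp]
  calc (∑ i ∈ s, ‖v i‖) ^ 2 ≤ s.card * ∑ i ∈ s, ‖v i‖ ^ 2 := sq_sum_le_card_mul_sum_sq
    _ ≤ k * ∑ i, ‖v i‖ ^ 2 := by
        gcongr
        · exact_mod_cast hv
        · exact Finset.subset_univ s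

end Sparse

theorem sparse_decomposition_stable_general
    (n k t : ℕ) (α : ℝ) (hα : 0 ≤ α)
    (hαkt : 2 * α * Real.sqrt (k * t) ≤ 0.19)
    (F : Matrix (Fin n) (Fin n) ℂ)
    (hFunit : F * F.conjTranspose = 1 ∧ F.conjTranspose * F = 1)
    (hF : ∀ i j, ‖F i j‖ ≤ α)
    (xh₁ xh₂ : Fin n → ℂ) (hxh₁ : Sparse k xh₁) (hxh₂ : Sparse k xh₂)
    (e₁ e₂ : Fin n → ℂ) (he₁ : Sparse t e₁) (he₂ : Sparse t e₂)
    (β : Fin n → ℂ)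
    (heq : F.conjTranspose.mulVec xh₁ + e₁ + β = F.conjTranspose.mulVec xh₂ + e₂) :
    Real.sqrt (l2norm (xh₁ - xh₂) ^ 2 + l2norm (e₁ - e₂) ^ 2) ≤ l2norm β / 0.9 := by
  set x := xh₁ - xh₂
  set e := e₁ - e₂
  set u := toLp 2 (Fᴴ *ᵥ x)
  set w := toLp 2 e
  have hβ : toLp 2 β = -(u + w) := by
    simp only [u, w, x, e, mulVec_sub, ← WithLp.toLp_add, ← WithLp.toLp_neg]
    congr 1
    linear_combination heq
  have hu : ‖u‖ = ‖toLp 2 x‖ :=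
    norm_toLp_mulVec_of_conjTranspose_mul_self (by rw [conjTranspose_conjTranspose, hFunit.1]) x
  have hx := (hxh₁.sub hxh₂).sum_norm_le_sqrt_mul_norm_toLp
  have he := (he₁.sub he₂).sum_norm_le_sqrt_mul_norm_toLp
  have hroot : √(k + k : ℕ) * √(t + t : ℕ) = 2 * √(k * t) := by
    rw [← Real.sqrt_mul (by positivity),
      show ((k + k : ℕ) : ℝ) * (t + t : ℕ) = 2 ^ 2 * (k * t) by push_cast; ring,
      Real.sqrt_mul (by positivity), Real.sqrt_sq (by norm_num)]
  have hinner : ‖inner ℂ u w‖ ≤ 2 * α * √(k * t) * ‖u‖ * ‖w‖ :=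
    calc ‖inner ℂ u w‖ ≤ α * (∑ i, ‖x i‖) * ∑ i, ‖e i‖ :=
          norm_inner_toLp_le (norm_mulVec_apply_le (fun i j => by simpa using hF j i) x) e
      _ ≤ α * (√(k + k : ℕ) * ‖toLp 2 x‖) * (√(t + t : ℕ) * ‖w‖) := by gcongr
      _ = 2 * α * √(k * t) * ‖u‖ * ‖w‖ := by
          rw [hu]
          linear_combination α * ‖toLp 2 x‖ * ‖w‖ * hroot
  simp only [l2norm_eq_norm_toLp]
  rw [hβ, norm_neg, ← hu]
  exact sqrt_norm_sq_add_norm_sq_le_norm_add_div (by positivity) hαkt hinner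

/-- Stability of the sparse-plus-corruption decomposition: if `2α√(kt) ≤ 0.19` and
`F⁻¹x̂₁ + e₁ + β = F⁻¹x̂₂ + e₂` with `x̂ᵢ` `k`-sparse and `eᵢ` `t`-sparse, then
`√(‖x̂₁ − x̂₂‖² + ‖e₁ − e₂‖²) ≤ ‖β‖ / 0.9`. Here `F⁻¹ = Fᴴ`. -/
theorem sparse_decomposition_stable
    (n k t : ℕ) (hn : 0 < n) (hk : 0 < k) (ht : 0 < t) (α : ℝ) (hα : 0 ≤ α)
    (hαkt : 2 * α * Real.sqrt (k * t) ≤ 0.19)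
    (F : Matrix (Fin n) (Fin n) ℂ)
    (hFunit : F * F.conjTranspose = 1 ∧ F.conjTranspose * F = 1)
    (hF : ∀ i j, ‖F i j‖ ≤ α)
    (xh₁ xh₂ : Fin n → ℂ) (hxh₁ : Sparse k xh₁) (hxh₂ : Sparse k xh₂)
    (e₁ e₂ : Fin n → ℂ) (he₁ : Sparse t e₁) (he₂ : Sparse t e₂)
    (β : Fin n → ℂ)
    (heq : F.conjTranspose.mulVec xh₁ + e₁ + β = F.conjTranspose.mulVec xh₂ + e₂) :
    Real.sqrt (l2norm (xh₁ - xh₂) ^ 2 + l2norm (e₁ - e₂) ^ 2) ≤ l2norm β / 0.9 :=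
  sparse_decomposition_stable_general n k t α hα hαkt F hFunit hF xh₁ xh₂ hxh₁ hxh₂ e₁ e₂ he₁ he₂ β
    heq
end
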